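/- For every integer n ≥ 0, every real N > 0 and every real X, the Gegenbauer polynomial has the moment representation C_n^N(X) = (2^n (N)_{n/2}/n!) · ∫_0^∞ ∫_ℝ (X√b + i z)^n · g(z) · γ_{N+n/2}(b) dz db, where (N)_{n/2} := Γ(N+n/2)/Γ(N). -/
import Mathlib

open Finset Polynomial MeasureTheory

/-- The Gegenbauer polynomial `C_n^N(X)` (real parameter and argument). -/
noncomputable def Geg (n : ℕ) (N X : ℝ) : ℝ :=
  ∑ k ∈ Finset.range (n / 2 + 1),
    (-1) ^ k * ((ascPochhammer ℝ (n - k)).eval N /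
      (((n - 2 * k).factorial : ℝ) * (k.factorial : ℝ))) * (2 * X) ^ (n - 2 * k)

/-- The density of a centered Gaussian with variance `1/2`: `g(z) = e^(-z²)/√π`. -/
noncomputable def gaussPdf (z : ℝ) : ℝ :=
  Real.exp (-z ^ 2) / Real.sqrt Real.pi

/-- The Gamma density with shape parameter `a`, `γ_a(b) = e^(-b) b^(a-1) / Γ(a)` on `(0,∞)`. -/
noncomputable def gammaPdf (a b : ℝ) : ℝ :=
  Real.exp (-b) * b ^ (a - 1) / Real.Gamma a

open Real Set

lemma L0 {s : ℝ} (hs : -1 < s) :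
    ∫ x in Ioi (0:ℝ), x ^ s * Real.exp (-x^2) = Real.Gamma ((s+1)/2) / 2 := by
  have h1 : Real.Gamma ((s+1)/2) = ∫ t in Ioi (0:ℝ), Real.exp (-t) * t ^ ((s+1)/2 - 1) :=
    Real.Gamma_eq_integral (by linarith)
  rw [← integral_comp_rpow_Ioi_of_pos zero_lt_two (g := fun t => Real.exp (-t) * t ^ ((s+1)/2 - 1))] at h1
  rw [eq_div_iff (two_ne_zero), h1, ← integral_mul_const]
  refine setIntegral_congr_fun measurableSet_Ioi fun x hx => ?_
  have hx' : (0:ℝ) < x := hx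
  have e1 : x ^ ((2:ℝ)) = x ^ (2:ℕ) := by
    rw [← Real.rpow_natCast x 2]; norm_num
  have e2 : (x ^ ((2:ℝ))) ^ ((s+1)/2 - 1) = x ^ (s - 1) := by
    rw [← Real.rpow_mul hx'.le]; congr 1; ring
  have e3 : x * x ^ (s-1) = x ^ s := by
    nth_rewrite 1 [← Real.rpow_one x]
    rw [← Real.rpow_add hx']; ring_nf
  rw [smul_eq_mul, e2, e1, show ((2:ℝ)-1) = 1 by norm_num, Real.rpow_one, ← e3]
  ring

lemma int_pow_gauss (j : ℕ) : Integrable (fun x : ℝ => x ^ j * Real.exp (-x^2)) := by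
  have h := integrable_rpow_mul_exp_neg_mul_sq (b := 1) one_pos (s := (j:ℝ))
    (neg_one_lt_zero.trans_le (Nat.cast_nonneg j))
  simpa [Real.rpow_natCast] using h

lemma gauss_odd {j : ℕ} (hj : Odd j) : ∫ x : ℝ, x ^ j * Real.exp (-x^2) = 0 := by
  have h := integral_neg_eq_self (fun x : ℝ => x ^ j * Real.exp (-x^2)) (volume : Measure ℝ)
  simp only [hj.neg_pow, neg_sq, neg_mul, integral_neg] at h
  linarith

lemma gamma_half (m : ℕ) :
    Real.Gamma ((m:ℝ) + 1/2) = Real.sqrt π * (2*m).factorial / (4^m * m.factorial) := by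
  induction m with
  | zero =>
    simpa [one_div] using Real.Gamma_one_half_eq
  | succ m ih =>
    have h1 : ((m+1:ℕ):ℝ) + 1/2 = ((m:ℝ) + 1/2) + 1 := by push_cast; ring
    rw [h1, Real.Gamma_add_one (by positivity), ih]
    have h4 : (4:ℝ)^m ≠ 0 := by positivity
    have hm : (m.factorial : ℝ) ≠ 0 := Nat.cast_ne_zero.2 m.factorial_ne_zero
    field_simp
    rw [show 2*(m+1) = (2*m+1)+1 by ring, Nat.factorial_succ, Nat.factorial_succ,
      Nat.factorial_succ]
    push_cast
    ring

lemma gauss_even (m : ℕ) :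
    ∫ x : ℝ, x ^ (2*m) * Real.exp (-x^2) =
      Real.sqrt π * (2*m).factorial / (4^m * m.factorial) := by
  have h0 : ∫ x : ℝ, x ^ (2*m) * Real.exp (-x^2)
      = ∫ x : ℝ, (fun t : ℝ => t ^ (2*m) * Real.exp (-t^2)) |x| := by
    congr 1; funext x
    simp only [pow_mul, sq_abs]
  rw [h0, integral_comp_abs (f := fun t : ℝ => t ^ (2*m) * Real.exp (-t^2))]
  have h1 : ∫ x in Ioi (0:ℝ), x ^ (2*m) * Real.exp (-x^2)
      = Real.Gamma ((((2*m:ℕ):ℝ))/2 + 1/2) / 2 := by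
    have := L0 (s := ((2*m : ℕ):ℝ)) (neg_one_lt_zero.trans_le (Nat.cast_nonneg _))
    simp only [Real.rpow_natCast] at this
    rw [this]
    ring_nf
  rw [h1, show (((2*m:ℕ):ℝ))/2 + 1/2 = (m:ℝ) + 1/2 by push_cast; ring, gamma_half]
  ring

lemma poch_eval {N : ℝ} (hN : 0 < N) (j : ℕ) :
    Real.Gamma (N + j) = (ascPochhammer ℝ j).eval N * Real.Gamma N := by
  induction j with
  | zero => simp
  | succ j ih =>
    rw [ascPochhammer_succ_right]
    have h1 : N + ((j+1:ℕ):ℝ) = (N + j) + 1 := by push_cast; ring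
    rw [h1, Real.Gamma_add_one (by positivity), ih]
    simp [Polynomial.eval_mul]
    ring

lemma gammaPdf_moment {a : ℝ} (ha : 0 < a) (k : ℕ) :
    ∫ b in Ioi (0:ℝ), (Real.sqrt b) ^ k * gammaPdf a b
      = Real.Gamma (a + k/2) / Real.Gamma a := by
  have hcong : EqOn (fun b : ℝ => (Real.sqrt b) ^ k * gammaPdf a b)
      (fun b : ℝ => (Real.exp (-b) * b ^ (a + k/2 - 1)) / Real.Gamma a) (Ioi 0) := by
    intro b hb
    have hb' : (0:ℝ) < b := hb
    have h1 : (Real.sqrt b) ^ k = b ^ ((k:ℝ)/2) := by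
      rw [Real.sqrt_eq_rpow, ← Real.rpow_natCast (b ^ ((1:ℝ)/2)) k,
        ← Real.rpow_mul hb'.le]
      ring_nf
    have h2 : b ^ ((k:ℝ)/2) * b ^ (a - 1) = b ^ (a + k/2 - 1) := by
      rw [← Real.rpow_add hb']; ring_nf
    simp only [gammaPdf, h1]
    rw [mul_div_assoc'] at *
    rw [show b ^ ((k:ℝ)/2) * (Real.exp (-b) * b ^ (a-1)) = Real.exp (-b) * (b ^ ((k:ℝ)/2) * b ^ (a-1)) by ring, h2]
  rw [setIntegral_congr_fun measurableSet_Ioi hcong]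
  rw [integral_div, ← Real.Gamma_eq_integral (by positivity)]

lemma gammaPdf_moment_integrable {a : ℝ} (ha : 0 < a) (k : ℕ) :
    IntegrableOn (fun b : ℝ => (Real.sqrt b) ^ k * gammaPdf a b) (Ioi 0) := by
  have h := (Real.GammaIntegral_convergent (s := a + k/2) (by positivity)).div_const (Real.Gamma a)
  apply MeasureTheory.IntegrableOn.congr_fun h _ measurableSet_Ioi
  intro b hb
  have hb' : (0:ℝ) < b := hb
  have h1 : (Real.sqrt b) ^ k = b ^ ((k:ℝ)/2) := by
    rw [Real.sqrt_eq_rpow, ← Real.rpow_natCast (b ^ ((1:ℝ)/2)) k, ← Real.rpow_mul hb'.le]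
    ring_nf
  have h2 : b ^ ((k:ℝ)/2) * b ^ (a - 1) = b ^ (a + k/2 - 1) := by
    rw [← Real.rpow_add hb']; ring_nf
  simp only [gammaPdf, h1]
  rw [eq_comm, mul_div_assoc',
    show b ^ ((k:ℝ)/2) * (Real.exp (-b) * b ^ (a-1)) = Real.exp (-b) * (b ^ ((k:ℝ)/2) * b ^ (a-1)) by ring, h2]

lemma int_pow_gaussPdf (j : ℕ) : Integrable (fun x : ℝ => x ^ j * gaussPdf x) := by
  simpa [gaussPdf, mul_div_assoc] using (int_pow_gauss j).div_const (Real.sqrt π)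

lemma gaussPdf_odd {j : ℕ} (hj : Odd j) : ∫ x : ℝ, x ^ j * gaussPdf x = 0 := by
  simp only [gaussPdf, ← mul_div_assoc, integral_div]
  rw [gauss_odd hj, zero_div]

lemma gaussPdf_even (m : ℕ) :
    ∫ x : ℝ, x ^ (2*m) * gaussPdf x = (2*m).factorial / (4^m * m.factorial) := by
  simp only [gaussPdf, ← mul_div_assoc, integral_div]
  rw [gauss_even m]
  have : Real.sqrt π ≠ 0 := by positivity
  field_simp

lemma inner_eval (n : ℕ) (c : ℝ) :
    ∫ z : ℝ, ((c : ℂ) + Complex.I * (z : ℂ)) ^ n * ((gaussPdf z : ℝ) : ℂ)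
      = ((∑ m ∈ Finset.range (n/2+1),
          (-1:ℝ)^m * (n.choose (2*m)) * ((2*m).factorial / (4^m * m.factorial))
            * c^(n-2*m) : ℝ) : ℂ) := by
  have expand : ∀ z : ℝ, ((c : ℂ) + Complex.I * (z : ℂ)) ^ n * ((gaussPdf z : ℝ) : ℂ)
      = ∑ j ∈ Finset.range (n+1),
          ((n.choose j : ℂ) * (c:ℂ)^(n-j) * Complex.I^j) * (((z^j * gaussPdf z : ℝ)) : ℂ) := by
    intro z
    rw [add_comm, add_pow, Finset.sum_mul]
    refine Finset.sum_congr rfl fun j hj => ?_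
    push_cast [mul_pow]
    ring
  rw [integral_congr_ae (Filter.EventuallyEq.of_eq (funext expand))]
  rw [integral_finset_sum (μ := volume) (s := Finset.range (n+1))
    (f := fun j (z : ℝ) => ((n.choose j : ℂ) * (c:ℂ)^(n-j) * Complex.I^j) * (((z^j * gaussPdf z : ℝ)) : ℂ))
    (fun j hj => (((int_pow_gaussPdf j).ofReal (𝕜 := ℂ)).const_mul _))]
  have hIR : ∀ j : ℕ, ∫ z : ℝ, ((z^j * gaussPdf z : ℝ) : ℂ)
      = (((∫ z : ℝ, z^j * gaussPdf z : ℝ)) : ℂ) := fun j => integral_ofReal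
  simp_rw [integral_const_mul, hIR]
  have hodd : ∀ j ∈ Finset.range (n+1), ¬ Even j →
      (n.choose j : ℂ) * (c:ℂ)^(n-j) * Complex.I^j * ((∫ z : ℝ, z^j * gaussPdf z : ℝ) : ℂ) = 0 := by
    intro j _ hj
    rw [gaussPdf_odd (Nat.not_even_iff_odd.1 hj)]
    simp
  rw [← Finset.sum_filter_of_ne (p := fun j => Even j) (by
    intro x hx h; by_contra hc; exact h (hodd x hx hc))]
  rw [Finset.sum_nbij' (i := fun j => j / 2) (j := fun m => 2 * m)
    (t := Finset.range (n/2+1))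
    (g := fun m => (n.choose (2*m) : ℂ) * (c:ℂ)^(n-2*m) * Complex.I^(2*m)
      * ((∫ z : ℝ, z^(2*m) * gaussPdf z : ℝ) : ℂ))
    (by intro a ha; simp only [Finset.mem_filter, Finset.mem_range, Nat.even_iff] at ha ⊢; omega)
    (by intro a ha; simp only [Finset.mem_filter, Finset.mem_range, Nat.even_iff] at ha ⊢; omega)
    (by intro a ha; simp only [Finset.mem_filter, Finset.mem_range, Nat.even_iff] at ha
        show 2 * (a / 2) = a; omega)
    (by intro a _; show 2 * a / 2 = a; omega)
    (by intro a ha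
        simp only [Finset.mem_filter, Finset.mem_range, Nat.even_iff] at ha
        have h2 : 2 * (a / 2) = a := by omega
        show _ = ↑(n.choose (2 * (a/2))) * (c:ℂ) ^ (n - 2 * (a/2)) * Complex.I ^ (2 * (a/2))
          * ((∫ z : ℝ, z ^ (2 * (a/2)) * gaussPdf z : ℝ) : ℂ)
        rw [h2])]
  rw [Complex.ofReal_sum]
  refine Finset.sum_congr rfl fun m hm => ?_
  rw [gaussPdf_even m, pow_mul, Complex.I_sq]
  push_cast
  ring

/-- Moment representation:
`C_n^N(X) = (2^n (N)_(n/2)/n!) ∫_0^∞ ∫_ℝ (X√b + i z)^n g(z) γ_(N+n/2)(b) dz db`,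
where `(N)_(n/2) = Γ(N+n/2)/Γ(N)`. -/
theorem gegenbauer_moment_representation (n : ℕ) (N : ℝ) (hN : 0 < N) (X : ℝ) :
    (Geg n N X : ℂ) =
      ((2 ^ n * (Real.Gamma (N + (n : ℝ) / 2) / Real.Gamma N) / (n.factorial : ℝ) : ℝ) : ℂ) *
        ∫ b in Set.Ioi (0 : ℝ), ∫ z : ℝ,
          (((X * Real.sqrt b : ℝ) : ℂ) + Complex.I * (z : ℂ)) ^ n *
            ((gaussPdf z : ℝ) : ℂ) * ((gammaPdf (N + (n : ℝ) / 2) b : ℝ) : ℂ) := by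
  set a : ℝ := N + (n:ℝ)/2 with ha_def
  have ha : 0 < a := by positivity
  set S : ℝ → ℝ := fun b => ∑ m ∈ Finset.range (n/2+1),
      (-1:ℝ)^m * (n.choose (2*m)) * ((2*m).factorial / (4^m * m.factorial))
        * (X * Real.sqrt b)^(n-2*m) with hS_def
  -- inner integral
  have hBB : ∀ b : ℝ,
      (∫ z : ℝ, (((X * Real.sqrt b : ℝ) : ℂ) + Complex.I * (z : ℂ)) ^ n *
        ((gaussPdf z : ℝ) : ℂ) * ((gammaPdf a b : ℝ) : ℂ))
      = ((S b * gammaPdf a b : ℝ) : ℂ) := by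
    intro b
    rw [integral_mul_const, inner_eval n (X * Real.sqrt b), ← Complex.ofReal_mul]
  simp_rw [hBB]
  rw [show (∫ b in Ioi (0:ℝ), ((S b * gammaPdf a b : ℝ) : ℂ))
      = (((∫ b in Ioi (0:ℝ), S b * gammaPdf a b : ℝ)) : ℂ) from integral_ofReal]
  rw [← Complex.ofReal_mul, Complex.ofReal_inj]
  -- now a real identity
  have hSexp : ∀ b : ℝ, S b * gammaPdf a b = ∑ m ∈ Finset.range (n/2+1),
      ((-1:ℝ)^m * (n.choose (2*m)) * ((2*m).factorial / (4^m * m.factorial)) * X^(n-2*m))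
        * ((Real.sqrt b)^(n-2*m) * gammaPdf a b) := by
    intro b
    rw [hS_def, Finset.sum_mul]
    refine Finset.sum_congr rfl fun m hm => ?_
    rw [mul_pow]
    ring
  rw [setIntegral_congr_fun measurableSet_Ioi (fun b _ => hSexp b)]
  rw [integral_finset_sum _ (fun m _ => ((gammaPdf_moment_integrable ha (n-2*m)).const_mul _))]
  simp_rw [integral_const_mul, gammaPdf_moment ha]
  -- termwise equality
  rw [Geg, Finset.mul_sum]
  refine Finset.sum_congr rfl fun k hk => ?_
  have hk' : k ≤ n/2 := Nat.lt_succ_iff.1 (Finset.mem_range.1 hk)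
  have h2k : 2*k ≤ n := by omega
  have hkn : k ≤ n := by omega
  have hcast : ((n - 2*k : ℕ) : ℝ) = (n:ℝ) - 2*k := by
    push_cast [Nat.cast_sub h2k]; ring
  have harg : a + ((n-2*k:ℕ):ℝ)/2 = N + ((n - k : ℕ):ℝ) := by
    rw [hcast, Nat.cast_sub hkn, ha_def]; push_cast; ring
  rw [harg, poch_eval hN (n-k)]
  have hfac : (n.factorial:ℝ) = (n.choose (2*k) : ℝ) * ((2*k).factorial : ℝ) * ((n-2*k).factorial : ℝ) := by
    exact_mod_cast (Nat.choose_mul_factorial_mul_factorial h2k).symm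
  have hpow2 : (2:ℝ)^n = 2^(n-2*k) * 4^k := by
    rw [show n = (n-2*k) + 2*k by omega, pow_add, pow_mul]
    norm_num
  have hGN : Real.Gamma N ≠ 0 := (Real.Gamma_pos_of_pos hN).ne'
  have hGa : Real.Gamma a ≠ 0 := (Real.Gamma_pos_of_pos ha).ne'
  have hf1 : ((n-2*k).factorial : ℝ) ≠ 0 := Nat.cast_ne_zero.2 (Nat.factorial_ne_zero _)
  have hf2 : (k.factorial : ℝ) ≠ 0 := Nat.cast_ne_zero.2 (Nat.factorial_ne_zero _)
  have hf3 : ((2*k).factorial : ℝ) ≠ 0 := Nat.cast_ne_zero.2 (Nat.factorial_ne_zero _)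
  have h4k : (4:ℝ)^k ≠ 0 := by positivity
  have hch : (n.choose (2*k) : ℝ) ≠ 0 := Nat.cast_ne_zero.2 (Nat.choose_pos h2k).ne'
  rw [mul_pow, hfac, hpow2]
  field_simp
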